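/- arXiv:1505.04129 — 2 statements merged into one kernel-verified Lean document; each statement's English description precedes it below -/
import Mathlib

section
/- Let A and B be nonempty closed convex subsets of X, set T := P_B ∘ P_A, and suppose T has no fixed point. Fix x ∈ X and define b₀ := x, b_{n+1} := T(b_n). Set R := (rec A) ∩ (rec B). Then every cluster point of the (eventually well-defined) sequence (b_n/‖b_n‖) lies in R ∩ R^⊕; moreover R ∩ R^⊕ is a closed convex cone that properly contains {0}. -/
open Filter Topology

variable {X : Type*} [NormedAddCommGroup X] [InnerProductSpace ℝ X] [FiniteDimensional ℝ X]

/-- `P` is the projector onto the set `C`: `P x` is a point of `C` nearest to `x`. -/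
def IsProjector (C : Set X) (P : X → X) : Prop :=
  ∀ x : X, P x ∈ C ∧ ∀ y ∈ C, ‖x - P x‖ ≤ ‖x - y‖

/-- The recession cone `rec S = {x : x + S ⊆ S}` of a set `S`. -/
def recCone (S : Set X) : Set X := {x : X | ∀ s ∈ S, x + s ∈ S}

/-- `S^⊕ = −(S^⊖) = {x : ⟪x, s⟫ ≥ 0 for all s ∈ S}`. -/
def plusCone (S : Set X) : Set X := {x : X | ∀ s ∈ S, (0 : ℝ) ≤ inner ℝ x s}

/-!
For a projector `P` onto `C`, the vector `u - P u` lies in `(rec C)^⊖`; hence `⟪T u, r⟫ ≥ ⟪u, r⟫`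
for `r ∈ R`, so `⟪b_n, r⟫` is bounded below and, once `‖b_n‖ → ∞`, every cluster point of
`b_n/‖b_n‖` lies in `R^⊕`. It lies in `R` because `B` contains `b_n` and `A` contains `P_A b_n`,
which stays at bounded distance from `b_n`.

That `‖b_n‖ → ∞` comes from the gaps `‖P_A b_n - b_{n+1}‖`, which decrease to a limit `L`.
If a subsequence of `b_n` converged to `p`, continuity of the projectors would give
`‖T p - P_A (T p)‖ = L = ‖P_A p - T p‖`, so `P_A p` is a nearest point of `A` to `T p`;
uniqueness of nearest points then gives `P_A (T p) = P_A p` and `T (T p) = T p`.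
Finally `R ∩ R^⊕` contains such a cluster point, of norm one.
-/

open RealInnerProductSpace

set_option linter.unusedSectionVars false

namespace IsProjector

variable {C : Set X} {P : X → X}

theorem mem (hP : IsProjector C P) (x : X) : P x ∈ C := (hP x).1

theorem norm_sub_le (hP : IsProjector C P) (x : X) {y : X} (hy : y ∈ C) :
    ‖x - P x‖ ≤ ‖x - y‖ :=
  (hP x).2 y hy

theorem inner_sub_le_zero_of_forall_norm_le (hC : Convex ℝ C) {x y : X} (hy : y ∈ C)
    (hmin : ∀ w ∈ C, ‖x - y‖ ≤ ‖x - w‖) {w : X} (hw : w ∈ C) : ⟪x - y, w - y⟫ ≤ 0 := by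
  have : Nonempty C := ⟨⟨y, hy⟩⟩
  have hbdd : BddBelow (Set.range fun w : C => ‖x - w‖) :=
    ⟨0, Set.forall_mem_range.2 fun _ => norm_nonneg _⟩
  exact (norm_eq_iInf_iff_real_inner_le_zero hC hy).1
    (le_antisymm (le_ciInf fun w => hmin w w.2) (ciInf_le hbdd ⟨y, hy⟩)) w hw

theorem inner_sub_le_zero (hC : Convex ℝ C) (hP : IsProjector C P) (x : X) {w : X}
    (hw : w ∈ C) : ⟪x - P x, w - P x⟫ ≤ 0 :=
  inner_sub_le_zero_of_forall_norm_le hC (hP.mem x) (fun _ => hP.norm_sub_le x) hw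

theorem apply_eq_of_forall_norm_le (hC : Convex ℝ C) (hP : IsProjector C P) {x y : X}
    (hy : y ∈ C) (hmin : ∀ w ∈ C, ‖x - y‖ ≤ ‖x - w‖) : P x = y := by
  have h₁ := hP.inner_sub_le_zero hC x hy
  have h₂ := inner_sub_le_zero_of_forall_norm_le hC hy hmin (hP.mem x)
  have hsq : ‖y - P x‖ ^ 2 = ⟪x - P x, y - P x⟫ + ⟪x - y, P x - y⟫ := by
    rw [← real_inner_self_eq_norm_sq]
    simp only [inner_sub_left, inner_sub_right]
    ring
  have : ‖y - P x‖ = 0 := by nlinarith [norm_nonneg (y - P x)]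
  exact (sub_eq_zero.1 (norm_eq_zero.1 this)).symm

theorem lipschitzWith_one (hC : Convex ℝ C) (hP : IsProjector C P) : LipschitzWith 1 P := by
  refine LipschitzWith.of_dist_le_mul fun u v => ?_
  rw [NNReal.coe_one, one_mul, dist_eq_norm, dist_eq_norm]
  have h₁ := hP.inner_sub_le_zero hC u (hP.mem v)
  have h₂ := hP.inner_sub_le_zero hC v (hP.mem u)
  have hsq : ‖P u - P v‖ ^ 2 =
      ⟪u - v, P u - P v⟫ + ⟪u - P u, P v - P u⟫ + ⟪v - P v, P u - P v⟫ := by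
    rw [← real_inner_self_eq_norm_sq]
    simp only [inner_sub_left, inner_sub_right]
    ring
  nlinarith [real_inner_le_norm (u - v) (P u - P v), norm_nonneg (P u - P v),
    norm_nonneg (u - v)]

theorem continuous (hC : Convex ℝ C) (hP : IsProjector C P) : Continuous P :=
  (hP.lipschitzWith_one hC).continuous

theorem inner_sub_le_zero_of_mem_recCone (hC : Convex ℝ C) (hP : IsProjector C P) (x : X)
    {r : X} (hr : r ∈ recCone C) : ⟪x - P x, r⟫ ≤ 0 := by
  simpa using hP.inner_sub_le_zero hC x (hr _ (hP.mem x))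

end IsProjector

theorem isClosed_recCone {S : Set X} (hS : IsClosed S) : IsClosed (recCone S) := by
  have : recCone S = ⋂ s ∈ S, (· + s) ⁻¹' S := by
    ext x
    simp [recCone]
  rw [this]
  exact isClosed_biInter fun s _ => hS.preimage (continuous_add_const s)

theorem convex_recCone {S : Set X} (hS : Convex ℝ S) : Convex ℝ (recCone S) := by
  intro u hu v hv a c ha hc hac s hs
  convert hS (hu s hs) (hv s hs) ha hc hac using 1
  rw [smul_add, smul_add, add_add_add_comm, ← add_smul, hac, one_smul]

theorem nsmul_add_mem_of_mem_recCone {S : Set X} {y s : X} (hy : y ∈ recCone S) (hs : s ∈ S)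
    (n : ℕ) : n • y + s ∈ S := by
  induction n with
  | zero => simpa using hs
  | succ n ih => simpa [succ_nsmul, add_comm, add_left_comm] using hy _ ih

theorem smul_mem_recCone {S : Set X} (hS : Convex ℝ S) {t : ℝ} (ht : 0 ≤ t) {y : X}
    (hy : y ∈ recCone S) : t • y ∈ recCone S := by
  intro s hs
  obtain ⟨n, hn⟩ := exists_nat_ge t
  have hn₀ : (0 : ℝ) < n + 1 := by positivity
  have hmem := hS.add_smul_mem hs
    (by rw [add_comm]; exact nsmul_add_mem_of_mem_recCone hy hs (n + 1))
    (t := t / (n + 1)) ⟨by positivity, by rw [div_le_one hn₀]; linarith⟩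
  rwa [← Nat.cast_smul_eq_nsmul ℝ, smul_smul, Nat.cast_succ, div_mul_cancel₀ _ hn₀.ne',
    add_comm] at hmem

theorem isClosed_plusCone (S : Set X) : IsClosed (plusCone S) := by
  have : plusCone S = ⋂ s ∈ S, {x : X | 0 ≤ ⟪x, s⟫} := by
    ext x
    simp [plusCone]
  rw [this]
  exact isClosed_biInter fun s _ =>
    isClosed_le continuous_const (continuous_id.inner continuous_const)

theorem convex_plusCone (S : Set X) : Convex ℝ (plusCone S) := by
  intro u hu v hv a c ha hc _ s hs
  simpa [inner_add_left, real_inner_smul_left] using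
    add_nonneg (mul_nonneg ha (hu s hs)) (mul_nonneg hc (hv s hs))

theorem smul_mem_plusCone (S : Set X) {t : ℝ} (ht : 0 ≤ t) {y : X} (hy : y ∈ plusCone S) :
    t • y ∈ plusCone S := fun s hs => by
  rw [real_inner_smul_left]
  exact mul_nonneg ht (hy s hs)

theorem mem_recCone_of_tendsto_smul {ι : Type*} {l : Filter ι} [l.NeBot] {C : Set X}
    (hCcl : IsClosed C) (hCconv : Convex ℝ C) {t : ι → ℝ} {c : ι → X} {q : X}
    (ht : Tendsto t l (𝓝 0)) (ht₀ : ∀ i, 0 ≤ t i) (hc : ∀ᶠ i in l, c i ∈ C)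
    (hq : Tendsto (fun i => t i • c i) l (𝓝 q)) : q ∈ recCone C := by
  intro s hs
  have hmem : ∀ᶠ i in l, (1 - t i) • s + t i • c i ∈ C := by
    filter_upwards [hc, ht.eventually (eventually_le_nhds one_pos)] with i hci hti
    exact hCconv hs hci (sub_nonneg.2 hti) (ht₀ i) (sub_add_cancel 1 _)
  have hlim : Tendsto (fun i => (1 - t i) • s + t i • c i) l (𝓝 (s + q)) := by
    simpa using ((tendsto_const_nhds (x := (1 : ℝ)).sub ht).smul_const s).add hq
  rw [add_comm]
  exact hCcl.mem_of_tendsto hlim hmem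

theorem mem_plusCone_of_tendsto_smul {ι : Type*} {l : Filter ι} [l.NeBot] {S : Set X}
    {t : ι → ℝ} {c : ι → X} {q : X} (ht : Tendsto t l (𝓝 0)) (ht₀ : ∀ i, 0 ≤ t i)
    (hc : ∀ r ∈ S, ∃ m, ∀ i, m ≤ ⟪c i, r⟫) (hq : Tendsto (fun i => t i • c i) l (𝓝 q)) :
    q ∈ plusCone S := by
  intro r hr
  obtain ⟨m, hm⟩ := hc r hr
  refine le_of_tendsto_of_tendsto' (by simpa using ht.mul_const m)
    (hq.inner tendsto_const_nhds) fun i => ?_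
  rw [real_inner_smul_left]
  exact mul_le_mul_of_nonneg_left (hm i) (ht₀ i)

section AlternatingProjections

variable {A B : Set X} {PA PB : X → X}

theorem inner_le_inner_comp_of_mem_recCone (hAconv : Convex ℝ A) (hBconv : Convex ℝ B)
    (hPA : IsProjector A PA) (hPB : IsProjector B PB) (u : X) {r : X} (hrA : r ∈ recCone A)
    (hrB : r ∈ recCone B) : ⟪u, r⟫ ≤ ⟪PB (PA u), r⟫ := by
  have h₁ := hPA.inner_sub_le_zero_of_mem_recCone hAconv u hrA
  have h₂ := hPB.inner_sub_le_zero_of_mem_recCone hBconv (PA u) hrB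
  simp only [inner_sub_left] at h₁ h₂
  linarith

theorem norm_comp_sub_le (hPA : IsProjector A PA) (u : X) :
    ‖PB (PA u) - PA (PB (PA u))‖ ≤ ‖PA u - PB (PA u)‖ := by
  rw [norm_sub_rev (PA u)]
  exact hPA.norm_sub_le _ (hPA.mem u)

theorem norm_proj_sub_le_of_mem (hPB : IsProjector B PB) {v : X} (hv : v ∈ B) :
    ‖PA v - PB (PA v)‖ ≤ ‖v - PA v‖ := by
  rw [norm_sub_rev v]
  exact hPB.norm_sub_le _ hv

theorem comp_comp_eq_of_norm_sub_eq (hAconv : Convex ℝ A) (hPA : IsProjector A PA) (u : X)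
    (h : ‖PB (PA u) - PA (PB (PA u))‖ = ‖PA u - PB (PA u)‖) :
    PB (PA (PB (PA u))) = PB (PA u) := by
  have hPA_eq : PA (PB (PA u)) = PA u := by
    refine hPA.apply_eq_of_forall_norm_le hAconv (hPA.mem u) fun w hw => ?_
    rw [norm_sub_rev, ← h]
    exact hPA.norm_sub_le _ hw
  rw [hPA_eq]

variable {b : ℕ → X}

theorem inner_le_inner_orbit (hAconv : Convex ℝ A) (hBconv : Convex ℝ B)
    (hPA : IsProjector A PA) (hPB : IsProjector B PB) (hb : ∀ n, b (n + 1) = PB (PA (b n)))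
    {r : X} (hrA : r ∈ recCone A) (hrB : r ∈ recCone B) (n : ℕ) : ⟪b 0, r⟫ ≤ ⟪b n, r⟫ := by
  induction n with
  | zero => rfl
  | succ n ih =>
    rw [hb n]
    exact ih.trans (inner_le_inner_comp_of_mem_recCone hAconv hBconv hPA hPB _ hrA hrB)

theorem norm_sub_proj_orbit_succ_le (hPA : IsProjector A PA)
    (hb : ∀ n, b (n + 1) = PB (PA (b n))) (n : ℕ) :
    ‖b (n + 1) - PA (b (n + 1))‖ ≤ ‖PA (b n) - b (n + 1)‖ := by
  rw [hb n]
  exact norm_comp_sub_le hPA (b n)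

theorem norm_proj_sub_orbit_succ_le (hPB : IsProjector B PB)
    (hb : ∀ n, b (n + 1) = PB (PA (b n))) (n : ℕ) :
    ‖PA (b (n + 1)) - b (n + 1 + 1)‖ ≤ ‖b (n + 1) - PA (b (n + 1))‖ := by
  rw [hb (n + 1)]
  exact norm_proj_sub_le_of_mem hPB (hb n ▸ hPB.mem _)

theorem antitone_norm_proj_sub_orbit (hPA : IsProjector A PA) (hPB : IsProjector B PB)
    (hb : ∀ n, b (n + 1) = PB (PA (b n))) : Antitone fun n => ‖PA (b n) - b (n + 1)‖ :=
  antitone_nat_of_succ_le fun n =>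
    (norm_proj_sub_orbit_succ_le hPB hb n).trans (norm_sub_proj_orbit_succ_le hPA hb n)

theorem norm_sub_proj_orbit_le (hPA : IsProjector A PA) (hPB : IsProjector B PB)
    (hb : ∀ n, b (n + 1) = PB (PA (b n))) (n : ℕ) :
    ‖b (n + 1) - PA (b (n + 1))‖ ≤ ‖PA (b 0) - b 1‖ :=
  (norm_sub_proj_orbit_succ_le hPA hb n).trans (antitone_norm_proj_sub_orbit hPA hPB hb n.zero_le)

theorem tendsto_norm_orbit_atTop (hAconv : Convex ℝ A) (hBconv : Convex ℝ B)
    (hPA : IsProjector A PA) (hPB : IsProjector B PB) (hfix : ∀ y, PB (PA y) ≠ y)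
    (hb : ∀ n, b (n + 1) = PB (PA (b n))) : Tendsto (fun n => ‖b n‖) atTop atTop := by
  by_contra hunbdd
  simp only [tendsto_atTop, not_forall, not_eventually, not_le] at hunbdd
  obtain ⟨M, hM⟩ := hunbdd
  obtain ⟨p, -, σ, hσ, hbσ⟩ := tendsto_subseq_of_frequently_bounded
    (Metric.isBounded_closedBall (x := (0 : X)) (r := M))
    (hM.mono fun n hn => mem_closedBall_zero_iff.2 hn.le)
  obtain ⟨L, hL⟩ : ∃ L, Tendsto (fun n => ‖PA (b n) - b (n + 1)‖) atTop (𝓝 L) :=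
    ⟨_, tendsto_atTop_ciInf (antitone_norm_proj_sub_orbit hPA hPB hb)
      ⟨0, Set.forall_mem_range.2 fun _ => norm_nonneg _⟩⟩
  have hL' : Tendsto (fun n => ‖b (n + 1) - PA (b (n + 1))‖) atTop (𝓝 L) :=
    tendsto_of_tendsto_of_tendsto_of_le_of_le (hL.comp (tendsto_add_atTop_nat 1)) hL
      (norm_proj_sub_orbit_succ_le hPB hb) (norm_sub_proj_orbit_succ_le hPA hb)
  have hcA := hPA.continuous hAconv
  have hcB := hPB.continuous hBconv
  have hgap_p : ‖PA p - PB (PA p)‖ = L := by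
    refine tendsto_nhds_unique ?_ (hL.comp hσ.tendsto_atTop)
    refine (((hcA.sub (hcB.comp hcA)).norm.tendsto p).comp hbσ).congr fun k => ?_
    simp only [Pi.sub_apply, Function.comp_apply, hb]
  have hgap_Tp : ‖PB (PA p) - PA (PB (PA p))‖ = L := by
    refine tendsto_nhds_unique ?_ (hL'.comp hσ.tendsto_atTop)
    refine ((((hcB.comp hcA).sub (hcA.comp (hcB.comp hcA))).norm.tendsto p).comp hbσ).congr
      fun k => ?_
    simp only [Pi.sub_apply, Function.comp_apply, hb]
  exact hfix _ (comp_comp_eq_of_norm_sub_eq hAconv hPA p (hgap_Tp.trans hgap_p.symm))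

theorem mapClusterPt_normalize_orbit_mem (hAcl : IsClosed A) (hAconv : Convex ℝ A)
    (hBcl : IsClosed B) (hBconv : Convex ℝ B) (hPA : IsProjector A PA) (hPB : IsProjector B PB)
    (hfix : ∀ y, PB (PA y) ≠ y) (hb : ∀ n, b (n + 1) = PB (PA (b n))) {q : X}
    (hq : MapClusterPt q atTop fun n => ‖b n‖⁻¹ • b n) :
    q ∈ (recCone A ∩ recCone B) ∩ plusCone (recCone A ∩ recCone B) := by
  obtain ⟨ψ, hψ, hqψ⟩ := hq.tendsto_subseq
  have ht : Tendsto (fun k => ‖b (ψ k)‖⁻¹) atTop (𝓝 0) := tendsto_inv_atTop_zero.comp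
    ((tendsto_norm_orbit_atTop hAconv hBconv hPA hPB hfix hb).comp hψ.tendsto_atTop)
  have ht₀ : ∀ k, 0 ≤ ‖b (ψ k)‖⁻¹ := fun k => inv_nonneg.2 (norm_nonneg _)
  have hlate : ∀ᶠ k in atTop, ∃ m, ψ k = m + 1 :=
    hψ.tendsto_atTop.eventually (p := fun n => ∃ m, n = m + 1)
      (eventually_atTop.2 ⟨1, fun n hn => ⟨n - 1, by omega⟩⟩)
  have hrecB : q ∈ recCone B := mem_recCone_of_tendsto_smul hBcl hBconv ht ht₀
    (hlate.mono fun k ⟨m, hm⟩ => hm ▸ hb m ▸ hPB.mem _) hqψ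
  have hqA : Tendsto (fun k => ‖b (ψ k)‖⁻¹ • PA (b (ψ k))) atTop (𝓝 q) := by
    have hsmall : Tendsto (fun k => ‖b (ψ k)‖⁻¹ • (PA (b (ψ k)) - b (ψ k))) atTop (𝓝 0) := by
      refine squeeze_zero_norm' (hlate.mono fun k ⟨m, hm⟩ => ?_)
        (by simpa using ht.mul_const ‖PA (b 0) - b 1‖)
      rw [norm_smul, Real.norm_of_nonneg (ht₀ k), norm_sub_rev]
      refine mul_le_mul_of_nonneg_left ?_ (ht₀ k)
      rw [hm]
      exact norm_sub_proj_orbit_le hPA hPB hb m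
    have h := hsmall.add hqψ
    rw [zero_add] at h
    exact h.congr fun k => by simp [smul_sub]
  have hrecA : q ∈ recCone A := mem_recCone_of_tendsto_smul hAcl hAconv ht ht₀
    (Eventually.of_forall fun k => hPA.mem _) hqA
  have hplus : q ∈ plusCone (recCone A ∩ recCone B) := mem_plusCone_of_tendsto_smul ht ht₀
    (fun r hr => ⟨_, fun k => inner_le_inner_orbit hAconv hBconv hPA hPB hb hr.1 hr.2 (ψ k)⟩) hqψ
  exact ⟨⟨hrecA, hrecB⟩, hplus⟩

end AlternatingProjections

theorem exists_mapClusterPt_normalize_of_tendsto_norm {ι : Type*} {l : Filter ι} [l.NeBot]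
    {u : ι → X} (hu : Tendsto (fun i => ‖u i‖) l atTop) :
    ∃ q : X, ‖q‖ = 1 ∧ MapClusterPt q l fun i => ‖u i‖⁻¹ • u i := by
  obtain ⟨q, hq, hclus⟩ := (isCompact_sphere (0 : X) 1).exists_mapClusterPt_of_frequently
    (f := fun i => ‖u i‖⁻¹ • u i)
    ((hu.eventually_gt_atTop 0).mono fun i hi => by simp [norm_smul, hi.ne']).frequently
  exact ⟨q, mem_sphere_zero_iff_norm.1 hq, hclus⟩

theorem stmt10_general (A B : Set X) (hAcl : IsClosed A) (hAconv : Convex ℝ A)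
    (hBcl : IsClosed B) (hBconv : Convex ℝ B)
    (PA PB : X → X) (hPA : IsProjector A PA) (hPB : IsProjector B PB)
    (T : X → X) (hT : T = PB ∘ PA) (hfix : ∀ x : X, T x ≠ x)
    (x : X) (b : ℕ → X) (hbrec : ∀ n : ℕ, b (n + 1) = T (b n))
    (R : Set X) (hR : R = recCone A ∩ recCone B) :
    (∀ q : X, MapClusterPt q atTop (fun n : ℕ => ‖b n‖⁻¹ • b n) → q ∈ R ∩ plusCone R) ∧
    IsClosed (R ∩ plusCone R) ∧
    Convex ℝ (R ∩ plusCone R) ∧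
    (∀ t : ℝ, 0 ≤ t → ∀ y ∈ R ∩ plusCone R, t • y ∈ R ∩ plusCone R) ∧
    ({0} : Set X) ⊂ R ∩ plusCone R := by
  subst hT hR
  have hcluster : ∀ q : X, MapClusterPt q atTop (fun n : ℕ => ‖b n‖⁻¹ • b n) →
      q ∈ (recCone A ∩ recCone B) ∩ plusCone (recCone A ∩ recCone B) := fun q hq =>
    mapClusterPt_normalize_orbit_mem hAcl hAconv hBcl hBconv hPA hPB hfix hbrec hq
  have hcone : ∀ t : ℝ, 0 ≤ t → ∀ y ∈ (recCone A ∩ recCone B) ∩ plusCone (recCone A ∩ recCone B),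
      t • y ∈ (recCone A ∩ recCone B) ∩ plusCone (recCone A ∩ recCone B) := fun t ht y hy =>
    ⟨⟨smul_mem_recCone hAconv ht hy.1.1, smul_mem_recCone hBconv ht hy.1.2⟩,
      smul_mem_plusCone _ ht hy.2⟩
  obtain ⟨q, hq_norm, hq⟩ := exists_mapClusterPt_normalize_of_tendsto_norm
    (tendsto_norm_orbit_atTop hAconv hBconv hPA hPB hfix hbrec)
  refine ⟨hcluster, ((isClosed_recCone hAcl).inter (isClosed_recCone hBcl)).inter
    (isClosed_plusCone _), ((convex_recCone hAconv).inter (convex_recCone hBconv)).inter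
    (convex_plusCone _), hcone, ?_⟩
  refine (Set.ssubset_iff_of_subset ?_).2 ⟨q, hcluster q hq, ?_⟩
  · exact Set.singleton_subset_iff.2 (zero_smul ℝ q ▸ hcone 0 le_rfl q (hcluster q hq))
  · rintro rfl
    simp at hq_norm

/-- For fixed-point free `T = P_B ∘ P_A` and `R = rec A ∩ rec B`,
every cluster point of the normalized iterates `b_n/‖b_n‖` lies in `R ∩ R^⊕`, and
`R ∩ R^⊕` is a closed convex cone properly containing `{0}`. -/
theorem stmt10 (A B : Set X) (hAne : A.Nonempty) (hAcl : IsClosed A) (hAconv : Convex ℝ A)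
    (hBne : B.Nonempty) (hBcl : IsClosed B) (hBconv : Convex ℝ B)
    (PA PB : X → X) (hPA : IsProjector A PA) (hPB : IsProjector B PB)
    (T : X → X) (hT : T = PB ∘ PA) (hfix : ∀ x : X, T x ≠ x)
    (x : X) (b : ℕ → X) (hb0 : b 0 = x) (hbrec : ∀ n : ℕ, b (n + 1) = T (b n))
    (R : Set X) (hR : R = recCone A ∩ recCone B) :
    (∀ q : X, MapClusterPt q atTop (fun n : ℕ => ‖b n‖⁻¹ • b n) → q ∈ R ∩ plusCone R) ∧
    IsClosed (R ∩ plusCone R) ∧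
    Convex ℝ (R ∩ plusCone R) ∧
    (∀ t : ℝ, 0 ≤ t → ∀ y ∈ R ∩ plusCone R, t • y ∈ R ∩ plusCone R) ∧
    ({0} : Set X) ⊂ R ∩ plusCone R :=
  stmt10_general A B hAcl hAconv hBcl hBconv PA PB hPA hPB T hT hfix x b hbrec R hR
end

section
/- Let A and B be nonempty closed convex subsets of X, set T := P_B ∘ P_A, and suppose T has no fixed point. Set R := (rec A) ∩ (rec B). Then neither R nor R^⊕ is a linear subspace of X (i.e. neither set is the carrier of a submodule of X). -/
/-!
If `R = rec A ∩ rec B` is a subspace `W`, the orthogonal projection onto `Wᗮ` maps `A` into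
`A ∩ Wᗮ` and `B` into `B ∩ Wᗮ` without increasing distances. A common recession direction of
these two sets lies in `W ∩ Wᗮ = 0`; since normalising an unbounded sequence of nearby pairs
would produce a nonzero one, the sublevel sets of `(a, b) ↦ ‖a - b‖` on them are compact, and
the distance between them, hence between `A` and `B`, is attained at some pair `(a, b)`. Then
`b` is a fixed point of `P_B ∘ P_A`, since `P_A b` is again at minimal distance from `b` and
nearest points in convex sets are unique. If instead `R^⊕` is a subspace `W`, the bipolar
theorem for the closed convex cone `R` gives `R = W^⊕ = Wᗮ`.
-/

open Filter Topology

variable {X : Type*} [NormedAddCommGroup X] [InnerProductSpace ℝ X] [FiniteDimensional ℝ X]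

variable {E : Type*} [NormedAddCommGroup E]

section AddGroup

variable {A : Set E}

theorem zero_mem_recCone : (0 : E) ∈ recCone A := fun s hs => by simpa using hs

theorem add_mem_recCone {x y : E} (hx : x ∈ recCone A) (hy : y ∈ recCone A) :
    x + y ∈ recCone A := fun s hs => by
  simpa [add_assoc] using hx _ (hy s hs)

theorem nsmul_mem_recCone {x : E} (hx : x ∈ recCone A) (n : ℕ) : n • x ∈ recCone A := by
  induction n with
  | zero => simpa using zero_mem_recCone
  | succ n ih => simpa [succ_nsmul] using add_mem_recCone ih hx

theorem isClosed_recCone_s11 (hAcl : IsClosed A) : IsClosed (recCone A) := by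
  have : recCone A = ⋂ s ∈ A, (· + s) ⁻¹' A := by ext; simp [recCone]
  exact this ▸ isClosed_biInter fun s _ => hAcl.preimage (continuous_add_const s)

end AddGroup

section NormedSpace

variable [NormedSpace ℝ E] {A B : Set E}

theorem eq_of_forall_norm_sub_le [StrictConvexSpace ℝ E] {C : Set E} (hC : Convex ℝ C)
    {x p q : E} (hp : p ∈ C) (hq : q ∈ C)
    (hpmin : ∀ y ∈ C, ‖x - p‖ ≤ ‖x - y‖) (hqmin : ∀ y ∈ C, ‖x - q‖ ≤ ‖x - y‖) : p = q := by
  by_contra hne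
  have hmid : (1 / 2 : ℝ) • p + (1 / 2 : ℝ) • q ∈ C :=
    hC hp hq (by norm_num) (by norm_num) (by norm_num)
  have hlt : ‖(1 / 2 : ℝ) • (x - p) + (1 / 2 : ℝ) • (x - q)‖ < ‖x - p‖ :=
    norm_combo_lt_of_ne le_rfl (hqmin p hp) (by simpa using hne) (by norm_num) (by norm_num)
      (by norm_num)
  have hcombo : (1 / 2 : ℝ) • (x - p) + (1 / 2 : ℝ) • (x - q) =
      x - ((1 / 2 : ℝ) • p + (1 / 2 : ℝ) • q) := by
    module
  exact (hpmin _ hmid).not_gt (hcombo ▸ hlt)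

theorem tendsto_inv_smul_of_norm_sub_le {ι : Type*} {l : Filter ι} {a b : ι → E} {t : ι → ℝ}
    {c : ℝ} {v : E} (hab : ∀ i, ‖a i - b i‖ ≤ c) (ht : Tendsto t l atTop)
    (ha : Tendsto (fun i => (t i)⁻¹ • a i) l (𝓝 v)) :
    Tendsto (fun i => (t i)⁻¹ • b i) l (𝓝 v) := by
  have hbound : Tendsto (fun i => ‖(t i)⁻¹‖ * c) l (𝓝 0) := by
    simpa using ht.inv_tendsto_atTop.norm.mul_const c
  have hdiff : Tendsto (fun i => (t i)⁻¹ • (a i - b i)) l (𝓝 0) := by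
    refine squeeze_zero_norm (fun i => ?_) hbound
    rw [norm_smul]
    exact mul_le_mul_of_nonneg_left (hab i) (norm_nonneg _)
  simpa [smul_sub] using ha.sub hdiff

theorem smul_mem_recCone_s11 (hAconv : Convex ℝ A) {x : E} (hx : x ∈ recCone A) {c : ℝ}
    (hc : 0 ≤ c) : c • x ∈ recCone A := by
  intro s hs
  obtain ⟨n, hn⟩ := exists_nat_gt c
  have hnpos : (0 : ℝ) < n := hc.trans_lt hn
  have hseg := hAconv.add_smul_mem hs (by simpa [add_comm] using nsmul_mem_recCone hx n s hs)
    ⟨div_nonneg hc hnpos.le, (div_le_one hnpos).2 hn.le⟩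
  rwa [← Nat.cast_smul_eq_nsmul ℝ, smul_smul, div_mul_cancel₀ _ hnpos.ne', add_comm] at hseg

def recProperCone (hAcl : IsClosed A) (hAconv : Convex ℝ A) : ProperCone ℝ E where
  carrier := recCone A
  zero_mem' := zero_mem_recCone
  add_mem' := add_mem_recCone
  smul_mem' c _ hx := smul_mem_recCone_s11 hAconv hx c.2
  isClosed' := isClosed_recCone_s11 hAcl

theorem mem_recCone_of_tendsto_inv_smul (hAcl : IsClosed A) (hAconv : Convex ℝ A)
    {ι : Type*} {l : Filter ι} [l.NeBot] {a : ι → E} {t : ι → ℝ} {v : E}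
    (ha : ∀ i, a i ∈ A) (ht : Tendsto t l atTop)
    (hv : Tendsto (fun i => (t i)⁻¹ • a i) l (𝓝 v)) : v ∈ recCone A := by
  intro s hs
  have hmem : ∀ᶠ i in l, s + (t i)⁻¹ • (a i - s) ∈ A := by
    filter_upwards [ht.eventually_ge_atTop 1] with i hti
    exact hAconv.add_smul_mem hs (by simpa using ha i)
      ⟨inv_nonneg.2 (zero_le_one.trans hti), inv_le_one_of_one_le₀ hti⟩
  have hlim : Tendsto (fun i => s + (t i)⁻¹ • (a i - s)) l (𝓝 (v + s)) := by
    simpa [smul_sub, add_comm] using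
      tendsto_const_nhds.add (hv.sub (ht.inv_tendsto_atTop.smul_const s))
  exact hAcl.mem_of_tendsto hlim hmem

theorem recCone_subset_of_subset (hAcl : IsClosed A) (hAconv : Convex ℝ A) {A' : Set E}
    (hA'A : A' ⊆ A) (hA' : A'.Nonempty) : recCone A' ⊆ recCone A := by
  obtain ⟨a, ha⟩ := hA'
  intro v hv
  refine mem_recCone_of_tendsto_inv_smul hAcl hAconv
    (fun n : ℕ => hA'A (nsmul_mem_recCone hv n a ha)) (tendsto_natCast_atTop_atTop (R := ℝ)) ?_
  have hlim : Tendsto (fun n : ℕ => v + (n : ℝ)⁻¹ • a) atTop (𝓝 v) := by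
    simpa using tendsto_const_nhds.add
      ((tendsto_inv_atTop_zero.comp (tendsto_natCast_atTop_atTop (R := ℝ))).smul_const a)
  refine hlim.congr' ((eventually_ne_atTop 0).mono fun n hn => ?_)
  dsimp only
  rw [← Nat.cast_smul_eq_nsmul ℝ, smul_add, smul_smul, inv_mul_cancel₀ (Nat.cast_ne_zero.2 hn),
    one_smul]

theorem isBounded_setOf_exists_norm_sub_le [FiniteDimensional ℝ E] (hAcl : IsClosed A)
    (hAconv : Convex ℝ A) (hBcl : IsClosed B) (hBconv : Convex ℝ B)
    (hAB : ∀ v ∈ recCone A, v ∈ recCone B → v = 0) (c : ℝ) :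
    Bornology.IsBounded {a | a ∈ A ∧ ∃ b ∈ B, ‖a - b‖ ≤ c} := by
  by_contra hunb
  simp only [isBounded_iff_forall_norm_le, not_exists, not_forall, exists_prop, not_le] at hunb
  choose a ha hlarge using fun n : ℕ => hunb n
  choose b hb hab using fun n => (ha n).2
  have hsphere : ∀ n, ‖a n‖⁻¹ • a n ∈ Metric.sphere (0 : E) 1 := fun n => by
    have : ‖a n‖ ≠ 0 := (n.cast_nonneg.trans_lt (hlarge n)).ne'
    simp [norm_smul, this]
  obtain ⟨v, hv, φ, hφ, hlim⟩ := (isCompact_sphere (0 : E) 1).tendsto_subseq hsphere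
  have hnorm : Tendsto (fun n => ‖a (φ n)‖) atTop atTop :=
    tendsto_atTop_mono (fun n => (Nat.cast_le.2 hφ.le_apply).trans (hlarge (φ n)).le)
      tendsto_natCast_atTop_atTop
  have hvA := mem_recCone_of_tendsto_inv_smul hAcl hAconv (fun n => (ha (φ n)).1) hnorm hlim
  have hvB := mem_recCone_of_tendsto_inv_smul hBcl hBconv (fun n => hb (φ n)) hnorm
    (tendsto_inv_smul_of_norm_sub_le (fun n => hab (φ n)) hnorm hlim)
  simp [hAB v hvA hvB] at hv

theorem exists_isMinOn_norm_sub [FiniteDimensional ℝ E] (hAne : A.Nonempty) (hAcl : IsClosed A)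
    (hAconv : Convex ℝ A) (hBne : B.Nonempty) (hBcl : IsClosed B) (hBconv : Convex ℝ B)
    (hAB : ∀ v ∈ recCone A, v ∈ recCone B → v = 0) :
    ∃ p ∈ A ×ˢ B, IsMinOn (fun p : E × E => ‖p.1 - p.2‖) (A ×ˢ B) p := by
  obtain ⟨a₀, ha₀⟩ := hAne
  obtain ⟨b₀, hb₀⟩ := hBne
  have hdist : Continuous fun p : E × E => ‖p.1 - p.2‖ := (continuous_fst.sub continuous_snd).norm
  set K := {p : E × E | p ∈ A ×ˢ B ∧ ‖p.1 - p.2‖ ≤ ‖a₀ - b₀‖}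
  have hK : IsCompact K := by
    refine Metric.isCompact_of_isClosed_isBounded
      ((hAcl.prod hBcl).inter (isClosed_le hdist continuous_const)) ?_
    refine ((isBounded_setOf_exists_norm_sub_le hAcl hAconv hBcl hBconv hAB ‖a₀ - b₀‖).prod
      (isBounded_setOf_exists_norm_sub_le hBcl hBconv hAcl hAconv
        (fun v hvB hvA => hAB v hvA hvB) ‖a₀ - b₀‖)).subset fun p hp => ?_
    exact ⟨⟨hp.1.1, p.2, hp.1.2, hp.2⟩, ⟨hp.1.2, p.1, hp.1.1, by rw [norm_sub_rev]; exact hp.2⟩⟩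
  have hp₀ : (a₀, b₀) ∈ K := ⟨⟨ha₀, hb₀⟩, le_rfl⟩
  obtain ⟨p, hpK, hmin⟩ := hK.exists_isMinOn ⟨_, hp₀⟩ hdist.continuousOn
  refine ⟨p, hpK.1, isMinOn_iff.2 fun q hq => ?_⟩
  by_cases hqK : ‖q.1 - q.2‖ ≤ ‖a₀ - b₀‖
  · exact isMinOn_iff.1 hmin q ⟨hq, hqK⟩
  · exact (isMinOn_iff.1 hmin _ hp₀).trans (le_of_not_ge hqK)

theorem IsProjector.apply_apply_eq_of_isMinOn [StrictConvexSpace ℝ E] (hBconv : Convex ℝ B)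
    {PA PB : E → E} (hPA : IsProjector A PA) (hPB : IsProjector B PB) {p : E × E}
    (hp : p ∈ A ×ˢ B) (hmin : IsMinOn (fun p : E × E => ‖p.1 - p.2‖) (A ×ˢ B) p) :
    PB (PA p.2) = p.2 := by
  have hclose : ‖PA p.2 - p.2‖ ≤ ‖p.1 - p.2‖ := by
    simpa only [norm_sub_rev] using (hPA p.2).2 p.1 hp.1
  refine eq_of_forall_norm_sub_le hBconv (hPB _).1 hp.2 (hPB _).2 fun b hb => ?_
  exact hclose.trans (isMinOn_iff.1 hmin _ (Set.mk_mem_prod (hPA p.2).1 hb))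

end NormedSpace

section InnerProductSpace

variable [InnerProductSpace ℝ E] {A B : Set E}

theorem starProjection_orthogonal_mem (W : Submodule ℝ E) [W.HasOrthogonalProjection]
    (hW : (W : Set E) ⊆ recCone A) {a : E} (ha : a ∈ A) : Wᗮ.starProjection a ∈ A := by
  rw [Submodule.starProjection_orthogonal_val, sub_eq_neg_add]
  exact hW (W.neg_mem (W.starProjection_apply_mem a)) a ha

theorem exists_isMinOn_norm_sub_of_eq_submodule [FiniteDimensional ℝ E] (hAne : A.Nonempty)
    (hAcl : IsClosed A) (hAconv : Convex ℝ A) (hBne : B.Nonempty) (hBcl : IsClosed B)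
    (hBconv : Convex ℝ B) (W : Submodule ℝ E) (hW : (W : Set E) = recCone A ∩ recCone B) :
    ∃ p ∈ A ×ˢ B, IsMinOn (fun p : E × E => ‖p.1 - p.2‖) (A ×ˢ B) p := by
  set Q := Wᗮ.starProjection
  have hQA : ∀ a ∈ A, Q a ∈ A := fun a =>
    starProjection_orthogonal_mem W (hW ▸ Set.inter_subset_left)
  have hQB : ∀ b ∈ B, Q b ∈ B := fun b =>
    starProjection_orthogonal_mem W (hW ▸ Set.inter_subset_right)
  obtain ⟨a₀, ha₀⟩ := hAne
  obtain ⟨b₀, hb₀⟩ := hBne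
  have hA'ne : (A ∩ Wᗮ).Nonempty := ⟨Q a₀, hQA a₀ ha₀, Wᗮ.starProjection_apply_mem a₀⟩
  have hB'ne : (B ∩ Wᗮ).Nonempty := ⟨Q b₀, hQB b₀ hb₀, Wᗮ.starProjection_apply_mem b₀⟩
  have hWcl : IsClosed (Wᗮ : Set E) := Wᗮ.closed_of_finiteDimensional
  have hrec : ∀ v ∈ recCone (A ∩ Wᗮ), v ∈ recCone (B ∩ Wᗮ) → v = 0 := fun v hvA hvB => by
    have hvW : v ∈ W := by
      rw [← SetLike.mem_coe, hW]
      exact ⟨recCone_subset_of_subset hAcl hAconv Set.inter_subset_left hA'ne hvA,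
        recCone_subset_of_subset hBcl hBconv Set.inter_subset_left hB'ne hvB⟩
    obtain ⟨a, ha⟩ := hA'ne
    have hvW' : v ∈ Wᗮ := by simpa using Wᗮ.sub_mem (hvA a ha).2 ha.2
    exact inner_self_eq_zero.1 (W.inner_right_of_mem_orthogonal hvW hvW')
  obtain ⟨p, hp, hmin⟩ := exists_isMinOn_norm_sub hA'ne (hAcl.inter hWcl)
    (hAconv.inter Wᗮ.convex) hB'ne (hBcl.inter hWcl) (hBconv.inter Wᗮ.convex) hrec
  refine ⟨p, ⟨hp.1.1, hp.2.1⟩, isMinOn_iff.2 fun q hq => ?_⟩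
  calc ‖p.1 - p.2‖ ≤ ‖Q q.1 - Q q.2‖ := isMinOn_iff.1 hmin (Q q.1, Q q.2)
        ⟨⟨hQA _ hq.1, Wᗮ.starProjection_apply_mem _⟩, hQB _ hq.2, Wᗮ.starProjection_apply_mem _⟩
    _ = ‖Q (q.1 - q.2)‖ := by rw [map_sub]
    _ ≤ ‖q.1 - q.2‖ := Wᗮ.norm_starProjection_apply_le _

variable [CompleteSpace E]

theorem coe_innerDual_submodule (W : Submodule ℝ E) :
    (ProperCone.innerDual (W : Set E) : Set E) = Wᗮ := by
  ext y
  simp only [SetLike.mem_coe, ProperCone.mem_innerDual, Submodule.mem_orthogonal]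
  refine ⟨fun h u hu => le_antisymm ?_ (h hu), fun h u hu => (h u hu).ge⟩
  simpa [inner_neg_left] using h (W.neg_mem hu)

theorem ProperCone.coe_eq_orthogonal_of_coe_innerDual_eq (C : ProperCone ℝ E)
    {W : Submodule ℝ E} (h : (ProperCone.innerDual (C : Set E) : Set E) = W) :
    (C : Set E) = Wᗮ := by
  rw [← C.innerDual_innerDual, h, coe_innerDual_submodule]

theorem plusCone_eq_innerDual (S : Set E) : plusCone S = ProperCone.innerDual S := by
  ext x
  simp [plusCone, real_inner_comm]

end InnerProductSpace

/-- For fixed-point free `T = P_B ∘ P_A` and `R = rec A ∩ rec B`,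
neither `R` nor `R^⊕` is a linear subspace of `X`. -/
theorem stmt11 (A B : Set X) (hAne : A.Nonempty) (hAcl : IsClosed A) (hAconv : Convex ℝ A)
    (hBne : B.Nonempty) (hBcl : IsClosed B) (hBconv : Convex ℝ B)
    (PA PB : X → X) (hPA : IsProjector A PA) (hPB : IsProjector B PB)
    (T : X → X) (hT : T = PB ∘ PA) (hfix : ∀ x : X, T x ≠ x)
    (R : Set X) (hR : R = recCone A ∩ recCone B) :
    (¬∃ W : Submodule ℝ X, (W : Set X) = R) ∧
    (¬∃ W : Submodule ℝ X, (W : Set X) = plusCone R) := by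
  have hR_not_subspace : ¬∃ W : Submodule ℝ X, (W : Set X) = R := by
    rintro ⟨W, hW⟩
    obtain ⟨p, hp, hmin⟩ :=
      exists_isMinOn_norm_sub_of_eq_submodule hAne hAcl hAconv hBne hBcl hBconv W (hW.trans hR)
    exact hfix p.2 (hT ▸ hPA.apply_apply_eq_of_isMinOn hBconv hPB hp hmin)
  refine ⟨hR_not_subspace, fun ⟨W, hW⟩ => hR_not_subspace ⟨Wᗮ, ?_⟩⟩
  set C := recProperCone hAcl hAconv ⊓ recProperCone hBcl hBconv
  have hC : (C : Set X) = R := hR ▸ rfl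
  rw [← hC]
  exact (C.coe_eq_orthogonal_of_coe_innerDual_eq (by rw [hC, ← plusCone_eq_innerDual, hW])).symm
end
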